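/- For the regularized GLM Hessian estimate S̄_n = (1/(n+1))(S₀ + Σ_{i=0}^{n−1} ∂²₂ℓ(Y_{i+1}, θ_iᵀX_{i+1}) X_{i+1}X_{i+1}ᵀ + σd Σ_{i=1}^n e_{i[d]+1} e_{i[d]+1}ᵀ), where the second-derivative weights ∂²₂ℓ(Y_{i+1}, θ_iᵀX_{i+1}) are nonnegative, σ > 0 and S₀ is symmetric positive definite, the matrices S̄_n are deterministically uniformly invertible: for every n ≥ 0, ‖S̄_n^{−1}‖_op ≤ 2d · max{1/σ, ‖S₀^{−1}‖_op}; equivalently, λ_min(S̄_n) ≥ min{σ, λ_min(S₀)}/(2d). -/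

import Mathlib

open MeasureTheory ProbabilityTheory Filter Real Asymptotics
open scoped ENNReal NNReal Topology

abbrev Euc (d : ℕ) := EuclideanSpace ℝ (Fin d)

noncomputable def lambdaMin {d : ℕ} (A : Euc d →L[ℝ] Euc d) : ℝ :=
  ⨅ x : Metric.sphere (0 : Euc d) 1, (inner ℝ (A (x : Euc d)) (x : Euc d) : ℝ)

lemma glm_bddBelow_aux {d : ℕ} (A : Euc d →L[ℝ] Euc d) :
    BddBelow (Set.range fun x : Metric.sphere (0 : Euc d) 1 =>
      (inner ℝ (A (x : Euc d)) (x : Euc d) : ℝ)) := by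
  refine ⟨-‖A‖, ?_⟩
  rintro r ⟨x, rfl⟩
  have hx : ‖(x : Euc d)‖ = 1 := mem_sphere_zero_iff_norm.mp x.2
  have h2 := abs_real_inner_le_norm (A (x : Euc d)) (x : Euc d)
  have h3 := A.le_opNorm (x : Euc d)
  rw [hx, mul_one] at h2 h3
  have := neg_abs_le (inner ℝ (A (x : Euc d)) (x : Euc d) : ℝ)
  simp only [Set.mem_setOf_eq]
  linarith

lemma glm_lambdaMin_mul_le {d : ℕ} (A : Euc d →L[ℝ] Euc d) (x : Euc d) :
    lambdaMin A * ‖x‖ ^ 2 ≤ (inner ℝ (A x) x : ℝ) := by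
  rcases eq_or_ne x 0 with rfl | hx
  · simp
  · have hx0 : (0 : ℝ) < ‖x‖ := norm_pos_iff.mpr hx
    set u : Euc d := (‖x‖ : ℝ)⁻¹ • x with hu_def
    have hu : ‖u‖ = 1 := by
      have := norm_smul_inv_norm (𝕜 := ℝ) hx
      simpa using this
    have hmem : u ∈ Metric.sphere (0 : Euc d) 1 := mem_sphere_zero_iff_norm.mpr hu
    have h := ciInf_le (glm_bddBelow_aux A) (⟨u, hmem⟩ : Metric.sphere (0 : Euc d) 1)
    have heq : (inner ℝ (A u) u : ℝ) = ‖x‖⁻¹ * (‖x‖⁻¹ * (inner ℝ (A x) x : ℝ)) := by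
      rw [hu_def, _root_.map_smul, real_inner_smul_left, real_inner_smul_right]
    rw [heq] at h
    have hcancel : ‖x‖⁻¹ * ‖x‖ = 1 := inv_mul_cancel₀ hx0.ne'
    have h2 := mul_le_mul_of_nonneg_right h (mul_pos hx0 hx0).le
    calc lambdaMin A * ‖x‖ ^ 2 = lambdaMin A * (‖x‖ * ‖x‖) := by ring
    _ ≤ ‖x‖⁻¹ * (‖x‖⁻¹ * (inner ℝ (A x) x : ℝ)) * (‖x‖ * ‖x‖) := h2
    _ = (‖x‖⁻¹ * ‖x‖) * ((‖x‖⁻¹ * ‖x‖) * (inner ℝ (A x) x : ℝ)) := by ring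
    _ = (inner ℝ (A x) x : ℝ) := by rw [hcancel]; ring

lemma glm_le_lambdaMin {d : ℕ} (hd : 0 < d) (A : Euc d →L[ℝ] Euc d) (c : ℝ)
    (h : ∀ x : Euc d, ‖x‖ = 1 → c ≤ (inner ℝ (A x) x : ℝ)) : c ≤ lambdaMin A := by
  have hne : Nonempty (Metric.sphere (0 : Euc d) 1) :=
    ⟨⟨EuclideanSpace.single (⟨0, hd⟩ : Fin d) (1 : ℝ),
      mem_sphere_zero_iff_norm.mpr (by simp [EuclideanSpace.norm_single])⟩⟩
  exact le_ciInf fun x => h x (mem_sphere_zero_iff_norm.mp x.2)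

lemma glm_coercive_isUnit {d : ℕ} (A : Euc d →L[ℝ] Euc d) (c : ℝ) (hc : 0 < c)
    (h : ∀ x : Euc d, c * ‖x‖ ^ 2 ≤ (inner ℝ (A x) x : ℝ)) :
    IsUnit A ∧ ‖Ring.inverse A‖ ≤ 1 / c := by
  have h0 : ∀ x : Euc d, A x = 0 → x = 0 := by
    intro x hx
    have h1 := h x
    rw [hx, inner_zero_left] at h1
    have h2 : ‖x‖ ^ 2 ≤ 0 := by nlinarith
    have h3 : ‖x‖ = 0 := by nlinarith [sq_nonneg ‖x‖, norm_nonneg x]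
    exact norm_eq_zero.mp h3
  have hinj : Function.Injective A := by
    intro a b hab
    have : A (a - b) = 0 := by rw [map_sub, hab, sub_self]
    have := h0 _ this
    exact sub_eq_zero.mp this
  have hsurj : Function.Surjective A := by
    have h := LinearMap.injective_iff_surjective (f := (A : Euc d →ₗ[ℝ] Euc d))
    simp only [ContinuousLinearMap.coe_coe] at h
    exact h.mp hinj
  have hU : IsUnit A := ContinuousLinearMap.isUnit_iff_bijective.mpr ⟨hinj, hsurj⟩
  refine ⟨hU, ?_⟩
  have hAB : ∀ y, A (Ring.inverse A y) = y := by
    intro y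
    have h1 := Ring.mul_inverse_cancel A hU
    calc A (Ring.inverse A y) = (A * Ring.inverse A) y := rfl
    _ = y := by rw [h1]; rfl
  refine ContinuousLinearMap.opNorm_le_bound _ (by positivity) fun y => ?_
  by_cases hBy : Ring.inverse A y = 0
  · rw [hBy]; simp; positivity
  · have hpos : (0 : ℝ) < ‖Ring.inverse A y‖ := norm_pos_iff.mpr hBy
    have h1 := h (Ring.inverse A y)
    rw [hAB] at h1
    have h2 := real_inner_le_norm y (Ring.inverse A y)
    have h3 : c * ‖Ring.inverse A y‖ ≤ ‖y‖ := by nlinarith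
    rw [div_mul_eq_mul_div, le_div_iff₀ hc]
    nlinarith

lemma glm_cs_sym {d : ℕ} (T : Euc d →L[ℝ] Euc d)
    (hsym : ∀ x y : Euc d, (inner ℝ (T x) y : ℝ) = (inner ℝ x (T y) : ℝ))
    (hpos : ∀ x : Euc d, 0 ≤ (inner ℝ (T x) x : ℝ)) (u v : Euc d) :
    ((inner ℝ (T u) v : ℝ)) ^ 2 ≤ (inner ℝ (T u) u : ℝ) * (inner ℝ (T v) v : ℝ) := by
  have key : ∀ t : ℝ, 0 ≤ (inner ℝ (T v) v : ℝ) * (t * t) + (2 * (inner ℝ (T u) v : ℝ)) * t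
      + (inner ℝ (T u) u : ℝ) := by
    intro t
    have h0 := hpos (u + t • v)
    have hexp : (inner ℝ (T (u + t • v)) (u + t • v) : ℝ) =
        (inner ℝ (T v) v : ℝ) * (t * t) + (2 * (inner ℝ (T u) v : ℝ)) * t
          + (inner ℝ (T u) u : ℝ) := by
      rw [map_add, _root_.map_smul, inner_add_left, inner_add_right, inner_add_right,
        real_inner_smul_left, real_inner_smul_right, real_inner_smul_left,
        real_inner_smul_right]
      have h1 : (inner ℝ (T v) u : ℝ) = (inner ℝ (T u) v : ℝ) := by
        rw [hsym v u, real_inner_comm]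
      rw [h1]; ring
    linarith [hexp ▸ h0]
  have hdisc := discrim_le_zero key
  rw [discrim] at hdisc
  nlinarith [hdisc]

open Fin.NatCast in
lemma glm_block_sum {d : ℕ} (hd : 0 < d) (g : Fin d → ℝ) (b : ℕ) :
    ∑ i ∈ Finset.range d, g ⟨(b + i) % d, Nat.mod_lt _ hd⟩ = ∑ j, g j := by
  haveI : NeZero d := ⟨hd.ne'⟩
  rw [← Fin.sum_univ_eq_sum_range (fun i => g ⟨(b + i) % d, Nat.mod_lt _ hd⟩) d]
  refine Fintype.sum_bijective (fun i : Fin d => (b : Fin d) + i)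
    (Equiv.addLeft (b : Fin d)).bijective _ _ fun i => ?_
  congr 1
  apply Fin.ext
  simp [Fin.add_def, Fin.val_natCast, Nat.mod_add_mod]

lemma glm_multiblock {d : ℕ} (hd : 0 < d) (g : Fin d → ℝ) (m : ℕ) :
    ∑ i ∈ Finset.Ico 1 (1 + d * m), g ⟨i % d, Nat.mod_lt _ hd⟩ = m * ∑ j, g j := by
  induction m with
  | zero => simp
  | succ m ih =>
    have h1 : (1 : ℕ) ≤ 1 + d * m := by omega
    have h2 : 1 + d * m ≤ 1 + d * (m + 1) := by rw [Nat.mul_succ]; omega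
    rw [← Finset.sum_Ico_consecutive (fun i => g ⟨i % d, Nat.mod_lt _ hd⟩) h1 h2, ih]
    have h3 : ∑ i ∈ Finset.Ico (1 + d * m) (1 + d * (m + 1)),
        g ⟨i % d, Nat.mod_lt _ hd⟩ = ∑ j, g j := by
      rw [Finset.sum_Ico_eq_sum_range]
      have h4 : 1 + d * (m + 1) - (1 + d * m) = d := by rw [Nat.mul_succ]; omega
      rw [h4]
      exact glm_block_sum hd g (1 + d * m)
    rw [h3]
    push_cast
    ring

lemma glm_count {d : ℕ} (hd : 0 < d) (g : Fin d → ℝ) (hg : ∀ j, 0 ≤ g j) (n : ℕ) :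
    ((n / d : ℕ) : ℝ) * ∑ j, g j ≤ ∑ i ∈ Finset.Icc 1 n, g ⟨i % d, Nat.mod_lt _ hd⟩ := by
  rw [← Finset.Ico_add_one_right_eq_Icc]
  rw [← glm_multiblock hd g (n / d)]
  apply Finset.sum_le_sum_of_subset_of_nonneg
  · apply Finset.Ico_subset_Ico le_rfl
    have h5 : d * (n / d) ≤ n := Nat.mul_div_le n d
    omega
  · intro i _ _
    exact hg _
set_option maxHeartbeats 1000000 in
/-- Proposition 5.2 of the paper: the regularized GLM recursive Hessian estimates are
deterministically uniformly invertible. -/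
theorem glm_hessian_estimate_uniformly_invertible
    {Ω : Type} {mΩ : MeasurableSpace Ω} (μ : Measure Ω) [IsProbabilityMeasure μ]
    {d : ℕ} (hd : 2 ≤ d)
    (Xv : ℕ → Ω → Euc d) (Yv : ℕ → Ω → ℝ)
    (hXmeas : ∀ n, Measurable (Xv n)) (hYmeas : ∀ n, Measurable (Yv n))
    (hlaw : ∀ n, Measure.map (fun ω => (Xv n ω, Yv n ω)) μ =
      Measure.map (fun ω => (Xv 1 ω, Yv 1 ω)) μ)
    (hindep : iIndepFun (fun n ω => (Xv n ω, Yv n ω)) μ)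
    -- any sequence of iterates (e.g. the stochastic Newton ones)
    (θ : ℕ → Ω → Euc d)
    -- nonnegative second-derivative weights of the convex loss
    (ell'' : ℝ → ℝ → ℝ) (hell'' : ∀ y z, 0 ≤ ell'' y z)
    (σ : ℝ) (hσ : 0 < σ)
    (S0 : Euc d →L[ℝ] Euc d)
    (hS0sym : ∀ x y : Euc d, (inner ℝ (S0 x) y : ℝ) = (inner ℝ x (S0 y) : ℝ))
    (hS0pos : ∀ x : Euc d, x ≠ 0 → (0:ℝ) < (inner ℝ (S0 x) x : ℝ))
    (Sbar : ℕ → Ω → (Euc d →L[ℝ] Euc d))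
    (hSbar : ∀ (n : ℕ) (ω : Ω), Sbar n ω = (((n:ℝ)+1)⁻¹) •
      (S0
       + ∑ i ∈ Finset.range n, ell'' (Yv (i+1) ω) (inner ℝ (θ i ω) (Xv (i+1) ω) : ℝ) •
           (innerSL ℝ (Xv (i+1) ω)).smulRight (Xv (i+1) ω)
       + (σ * d) • ∑ i ∈ Finset.Icc 1 n,
           (innerSL ℝ (EuclideanSpace.single (⟨i % d, Nat.mod_lt i (by omega)⟩ : Fin d) (1:ℝ))).smulRight
             (EuclideanSpace.single (⟨i % d, Nat.mod_lt i (by omega)⟩ : Fin d) (1:ℝ)))) :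
    ∀ (n : ℕ) (ω : Ω),
      ‖Ring.inverse (Sbar n ω)‖ ≤ 2 * d * max (1/σ) ‖Ring.inverse S0‖ ∧
      min σ (lambdaMin S0) / (2 * d) ≤ lambdaMin (Sbar n ω) := by
  intro n ω
  have hd0 : 0 < d := by omega
  have hd1 : (1 : ℝ) ≤ (d : ℝ) := by exact_mod_cast hd0
  -- nonnegativity of the S0 quadratic form
  have hS0nneg : ∀ z : Euc d, 0 ≤ (inner ℝ (S0 z) z : ℝ) := by
    intro z
    rcases eq_or_ne z 0 with rfl | hz
    · simp
    · exact (hS0pos z hz).le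
  -- S0 is a unit
  have hS0zero : ∀ x : Euc d, S0 x = 0 → x = 0 := by
    intro x hx
    by_contra hne
    have := hS0pos x hne
    rw [hx, inner_zero_left] at this
    exact lt_irrefl _ this
  have hS0inj : Function.Injective S0 := by
    intro a b hab
    exact sub_eq_zero.mp (hS0zero _ (by rw [map_sub, hab, sub_self]))
  have hS0surj : Function.Surjective S0 := by
    have h := LinearMap.injective_iff_surjective (f := (S0 : Euc d →ₗ[ℝ] Euc d))
    simp only [ContinuousLinearMap.coe_coe] at h
    exact h.mp hS0inj
  have hS0unit : IsUnit S0 := ContinuousLinearMap.isUnit_iff_bijective.mpr ⟨hS0inj, hS0surj⟩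
  set B0 := Ring.inverse S0 with hB0def
  have hB0S0 : ∀ x, B0 (S0 x) = x := by
    intro x
    have h1 := Ring.inverse_mul_cancel S0 hS0unit
    calc B0 (S0 x) = (B0 * S0) x := rfl
    _ = x := by rw [h1]; rfl
  have hS0B0 : ∀ x, S0 (B0 x) = x := by
    intro x
    have h1 := Ring.mul_inverse_cancel S0 hS0unit
    calc S0 (B0 x) = (S0 * B0) x := rfl
    _ = x := by rw [h1]; rfl
  have hB0sym : ∀ u v : Euc d, (inner ℝ (B0 u) v : ℝ) = (inner ℝ u (B0 v) : ℝ) := by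
    intro u v
    calc (inner ℝ (B0 u) v : ℝ) = inner ℝ (B0 u) (S0 (B0 v)) := by rw [hS0B0]
    _ = inner ℝ (S0 (B0 u)) (B0 v) := (hS0sym _ _).symm
    _ = inner ℝ u (B0 v) := by rw [hS0B0]
  have hB0pos : ∀ u : Euc d, 0 ≤ (inner ℝ (B0 u) u : ℝ) := by
    intro u
    calc (0:ℝ) ≤ inner ℝ (S0 (B0 u)) (B0 u) := hS0nneg _
    _ = inner ℝ (B0 u) (S0 (B0 u)) := hS0sym _ _
    _ = inner ℝ (B0 u) u := by rw [hS0B0]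
  -- B0 has positive norm
  have hB0ne : B0 ≠ 0 := by
    intro hB
    set u0 : Euc d := EuclideanSpace.single (⟨0, hd0⟩ : Fin d) (1:ℝ) with hu0
    have h1 : B0 (S0 u0) = u0 := hB0S0 u0
    rw [hB] at h1
    have h2 : ‖u0‖ = 1 := by rw [hu0]; simp [EuclideanSpace.norm_single]
    rw [← h1] at h2
    simp at h2
  have hB0norm_pos : (0:ℝ) < ‖B0‖ := norm_pos_iff.mpr hB0ne
  -- lower bound for the S0 quadratic form on the sphere
  have hunit_lb : ∀ x : Euc d, ‖x‖ = 1 → 1 / ‖B0‖ ≤ (inner ℝ (S0 x) x : ℝ) := by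
    intro x hx
    have hcs := glm_cs_sym B0 hB0sym hB0pos (S0 x) x
    rw [hB0S0] at hcs
    have h1 : (inner ℝ x x : ℝ) = 1 := by
      rw [real_inner_self_eq_norm_sq, hx, one_pow]
    have h2 : (inner ℝ (B0 x) x : ℝ) ≤ ‖B0‖ := by
      have ha := real_inner_le_norm (B0 x) x
      have hb := B0.le_opNorm x
      rw [hx, mul_one] at ha hb
      linarith
    have h3 : (inner ℝ x (S0 x) : ℝ) = inner ℝ (S0 x) x := real_inner_comm _ _
    rw [h1, h3] at hcs
    rw [div_le_iff₀ hB0norm_pos]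
    nlinarith [hS0nneg x, hB0pos x]
  have hlam_lb : 1 / ‖B0‖ ≤ lambdaMin S0 := glm_le_lambdaMin hd0 S0 (1 / ‖B0‖) hunit_lb
  have hlampos : 0 < lambdaMin S0 := lt_of_lt_of_le (by positivity) hlam_lb
  set c := min σ (lambdaMin S0) / (2 * (d:ℝ)) with hcdef
  have hminpos : 0 < min σ (lambdaMin S0) := lt_min hσ hlampos
  have hcpos : 0 < c := by rw [hcdef]; positivity
  -- the quadratic form of Sbar
  have hquad : ∀ x : Euc d, (inner ℝ ((Sbar n ω) x) x : ℝ) =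
      ((n:ℝ)+1)⁻¹ * ((inner ℝ (S0 x) x : ℝ)
        + (∑ i ∈ Finset.range n, ell'' (Yv (i+1) ω) (inner ℝ (θ i ω) (Xv (i+1) ω) : ℝ)
            * ((inner ℝ (Xv (i+1) ω) x : ℝ) * (inner ℝ (Xv (i+1) ω) x : ℝ)))
        + (σ * d) * ∑ i ∈ Finset.Icc 1 n,
            x (⟨i % d, Nat.mod_lt i (by omega)⟩ : Fin d)
              * x (⟨i % d, Nat.mod_lt i (by omega)⟩ : Fin d)) := by
    intro x
    rw [hSbar]
    simp only [ContinuousLinearMap.smul_apply, ContinuousLinearMap.add_apply,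
      ContinuousLinearMap.sum_apply, ContinuousLinearMap.smulRight_apply, innerSL_apply_apply,
      real_inner_smul_left, inner_add_left, sum_inner, EuclideanSpace.inner_single_left,
      starRingEnd_apply, star_trivial, one_mul]
  -- coercivity of Sbar
  have hn1 : (0:ℝ) < (n:ℝ) + 1 := by positivity
  have hcoer : ∀ x : Euc d, c * ‖x‖ ^ 2 ≤ (inner ℝ ((Sbar n ω) x) x : ℝ) := by
    intro x
    rw [hquad x]
    set A := (inner ℝ (S0 x) x : ℝ) with hAdef
    set B := ∑ i ∈ Finset.range n, ell'' (Yv (i+1) ω) (inner ℝ (θ i ω) (Xv (i+1) ω) : ℝ)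
        * ((inner ℝ (Xv (i+1) ω) x : ℝ) * (inner ℝ (Xv (i+1) ω) x : ℝ)) with hBdef
    set C := ∑ i ∈ Finset.Icc 1 n,
        x (⟨i % d, Nat.mod_lt i (by omega)⟩ : Fin d)
          * x (⟨i % d, Nat.mod_lt i (by omega)⟩ : Fin d) with hCdef
    have hA : lambdaMin S0 * ‖x‖ ^ 2 ≤ A := glm_lambdaMin_mul_le S0 x
    have hA0 : 0 ≤ A := hS0nneg x
    have hB0' : 0 ≤ B := Finset.sum_nonneg fun i _ =>
      mul_nonneg (hell'' _ _) (mul_self_nonneg _)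
    have hC0 : 0 ≤ C := Finset.sum_nonneg fun i _ => mul_self_nonneg _
    have hxsum : ‖x‖ ^ 2 = ∑ j, x j * x j := by
      rw [← real_inner_self_eq_norm_sq, PiLp.inner_apply]
      simp [RCLike.inner_apply, pow_two]
    have hσdC : 0 ≤ σ * d * C := by positivity
    by_cases hcase : n + 1 ≤ 2 * d
    · -- small n
      have hle : ((n:ℝ)+1) ≤ 2*(d:ℝ) := by exact_mod_cast hcase
      have hinv : (2*(d:ℝ))⁻¹ ≤ ((n:ℝ)+1)⁻¹ := inv_anti₀ hn1 hle
      calc c * ‖x‖ ^ 2 = (2*(d:ℝ))⁻¹ * (min σ (lambdaMin S0) * ‖x‖ ^ 2) := by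
            rw [hcdef]; ring
      _ ≤ ((n:ℝ)+1)⁻¹ * (min σ (lambdaMin S0) * ‖x‖ ^ 2) :=
            mul_le_mul_of_nonneg_right hinv (by positivity)
      _ ≤ ((n:ℝ)+1)⁻¹ * (lambdaMin S0 * ‖x‖ ^ 2) :=
            mul_le_mul_of_nonneg_left
              (mul_le_mul_of_nonneg_right (min_le_right _ _) (sq_nonneg _)) (by positivity)
      _ ≤ ((n:ℝ)+1)⁻¹ * A := mul_le_mul_of_nonneg_left hA (by positivity)
      _ ≤ ((n:ℝ)+1)⁻¹ * (A + B + σ * d * C) :=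
            mul_le_mul_of_nonneg_left (by linarith) (by positivity)
    · -- large n
      have hn2d : 2 * d ≤ n := by omega
      have hcount : ((n / d : ℕ) : ℝ) * ∑ j, x j * x j ≤ C :=
        glm_count hd0 (fun j => x j * x j) (fun j => mul_self_nonneg _) n
      have hdm : (n:ℝ) + 1 ≤ 2 * (d:ℝ) * ((n / d : ℕ) : ℝ) := by
        have h5 : d * (n / d) ≤ n := Nat.mul_div_le n d
        have h6 : n % d < d := Nat.mod_lt n hd0
        have h7 := Nat.div_add_mod n d
        have h8 : (n + 1 : ℕ) ≤ 2 * (d * (n / d)) := by omega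
        calc (n:ℝ) + 1 = ((n + 1 : ℕ) : ℝ) := by push_cast; ring
        _ ≤ ((2 * (d * (n / d)) : ℕ) : ℝ) := by exact_mod_cast h8
        _ = 2 * (d:ℝ) * ((n / d : ℕ) : ℝ) := by push_cast; ring
      have hs0 : (0:ℝ) ≤ ∑ j, x j * x j := by rw [← hxsum]; positivity
      have h10 : σ * ((n:ℝ)+1) / 2 * (∑ j, x j * x j) ≤ σ * d * C := by
        have h11 : σ * ((n:ℝ)+1) / 2 * (∑ j, x j * x j)
            ≤ σ * d * (((n / d : ℕ) : ℝ) * ∑ j, x j * x j) := by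
          have key : ((n:ℝ)+1) * (σ/2 * ∑ j, x j * x j)
              ≤ (2*(d:ℝ)*((n / d : ℕ) : ℝ)) * (σ/2 * ∑ j, x j * x j) :=
            mul_le_mul_of_nonneg_right hdm
              (mul_nonneg (by positivity) hs0)
          calc σ * ((n:ℝ)+1) / 2 * (∑ j, x j * x j)
              = ((n:ℝ)+1) * (σ/2 * ∑ j, x j * x j) := by ring
          _ ≤ (2*(d:ℝ)*((n / d : ℕ) : ℝ)) * (σ/2 * ∑ j, x j * x j) := key
          _ = σ * d * (((n / d : ℕ) : ℝ) * ∑ j, x j * x j) := by ring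
        have h12 : σ * d * (((n / d : ℕ) : ℝ) * ∑ j, x j * x j) ≤ σ * d * C :=
          mul_le_mul_of_nonneg_left hcount (by positivity)
        linarith
      calc c * ‖x‖ ^ 2 ≤ σ / 2 * ‖x‖ ^ 2 := by
            apply mul_le_mul_of_nonneg_right _ (sq_nonneg _)
            rw [hcdef, div_le_div_iff₀ (by positivity) (by norm_num)]
            nlinarith [min_le_left σ (lambdaMin S0), hminpos.le]
      _ = ((n:ℝ)+1)⁻¹ * (σ * ((n:ℝ)+1) / 2 * ‖x‖ ^ 2) := by
            rw [show σ * ((n:ℝ)+1) / 2 * ‖x‖ ^ 2 = ((n:ℝ)+1) * (σ / 2 * ‖x‖ ^ 2) from by ring,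
              ← mul_assoc, inv_mul_cancel₀ hn1.ne', one_mul]
      _ ≤ ((n:ℝ)+1)⁻¹ * (σ * d * C) := by
            apply mul_le_mul_of_nonneg_left _ (by positivity)
            rw [hxsum]
            exact h10
      _ ≤ ((n:ℝ)+1)⁻¹ * (A + B + σ * d * C) :=
            mul_le_mul_of_nonneg_left (by linarith) (by positivity)
  obtain ⟨hUnit, hNorm⟩ := glm_coercive_isUnit (Sbar n ω) c hcpos hcoer
  constructor
  · have h1 : 1 / c = 2 * (d:ℝ) / min σ (lambdaMin S0) := by
      rw [hcdef, one_div_div]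
    have h2 : 2 * (d:ℝ) / min σ (lambdaMin S0) ≤ 2 * d * max (1/σ) ‖B0‖ := by
      rcases min_cases σ (lambdaMin S0) with ⟨hmin, _⟩ | ⟨hmin, _⟩
      · rw [hmin]
        calc 2 * (d:ℝ) / σ = 2 * d * (1/σ) := by ring
        _ ≤ 2 * d * max (1/σ) ‖B0‖ :=
            mul_le_mul_of_nonneg_left (le_max_left _ _) (by positivity)
      · rw [hmin]
        have h3 : 1 / lambdaMin S0 ≤ ‖B0‖ := by
          rw [div_le_iff₀ hlampos]
          rw [div_le_iff₀ hB0norm_pos] at hlam_lb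
          nlinarith
        calc 2 * (d:ℝ) / lambdaMin S0 = 2 * d * (1 / lambdaMin S0) := by ring
        _ ≤ 2 * d * ‖B0‖ := mul_le_mul_of_nonneg_left h3 (by positivity)
        _ ≤ 2 * d * max (1/σ) ‖B0‖ :=
            mul_le_mul_of_nonneg_left (le_max_right _ _) (by positivity)
    calc ‖Ring.inverse (Sbar n ω)‖ ≤ 1 / c := hNorm
    _ = 2 * (d:ℝ) / min σ (lambdaMin S0) := h1
    _ ≤ 2 * d * max (1/σ) ‖B0‖ := h2
  · refine glm_le_lambdaMin hd0 _ _ fun x hx => ?_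
    have := hcoer x
    rw [hx, one_pow, mul_one] at this
    exact this
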